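/- Liouville's number L = Σ_{n=1}^∞ 10^{−n!} is a primitive-recursively computable real number: there exists a primitive recursive function A : ℕ → ℚ such that for all x ∈ ℕ, |A(x) − L| ≤ 1/(x+1). -/

import Mathlib

/-- A real number is primitive-recursively computable if some primitive recursive
sequence of rationals approximates it with error at most `1/(x+1)`. -/
def IsPrimrecReal (a : ℝ) : Prop :=
  ∃ A : ℕ → ℚ, Primrec A ∧ ∀ x : ℕ, |(A x : ℝ) - a| ≤ 1 / ((x : ℝ) + 1)

/-!
The `x`-th approximant is the rational partial sum `∑_{n ≤ x} m^{-(n+1)!}`. Over the common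
denominator `m^{(x+1)!}` its numerator obeys a primitive recursion and is `≡ 1 (mod m)`, so the
fraction is already in lowest terms. Its distance to the full sum is the Liouville remainder
`∑_{n > x} m^{-(n+1)!} < m^{-(x+1)!(x+1)} ≤ 1/(x+1)`.

Primitive recursiveness has to be checked against the standard coding of `ℚ`: a rational is encoded
as `pair (encode num) den`, and the `Denumerable ℚ` instance renumbers these codes by their rank in
the range of the encoding. Counting that range below a given code is primitive recursive because
membership (positive denominator, coprime to the numerator's absolute value) only needs a
primitive recursive `gcd`.
-/

open Encodable Nat

namespace Primrec

theorem nat_pow : Primrec₂ ((· ^ ·) : ℕ → ℕ → ℕ) :=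
  Primrec₂.unpaired'.1 Nat.Primrec.pow

theorem nat_factorial : Primrec Nat.factorial :=
  (nat_rec₁ 1 (nat_mul.comp₂ (succ.comp₂ Primrec₂.left) Primrec₂.right)).of_eq fun n => by
    induction n with
    | zero => rfl
    | succ n ih => simp [Nat.factorial, ih]

end Primrec

/-- Euclid's step, made idle once the first entry is `0` so that iterating it too often is
harmless. -/
def Nat.euclidStep (p : ℕ × ℕ) : ℕ × ℕ :=
  if p.1 = 0 then p else (p.2 % p.1, p.1)

theorem Nat.euclidStep_iterate_snd {a n : ℕ} (h : a ≤ n) (b : ℕ) :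
    (euclidStep^[n] (a, b)).2 = Nat.gcd a b := by
  induction n generalizing a b with
  | zero => simp [Nat.le_zero.1 h]
  | succ n ih =>
    rw [Function.iterate_succ_apply]
    rcases Nat.eq_zero_or_pos a with rfl | ha
    · simpa [euclidStep] using ih (Nat.zero_le n) b
    · rw [euclidStep, if_neg ha.ne']
      exact (ih (Nat.lt_succ_iff.1 ((Nat.mod_lt b ha).trans_le h)) a).trans (Nat.gcd_rec a b).symm

theorem Primrec.nat_gcd : Primrec₂ Nat.gcd := by
  have hstep : Primrec Nat.euclidStep :=
    ite (Primrec.eq.comp fst (const 0)) .id (pair (nat_mod.comp snd fst) fst)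
  exact (snd.comp (nat_iterate fst .id (hstep.comp₂ Primrec₂.right))).of_eq
    fun p => Nat.euclidStep_iterate_snd le_rfl p.2

/-- The code of `a` in `Denumerable.ofEncodableOfInfinite α` is the number of codes below
`encode a` that lie in the range of `encode`. -/
theorem Denumerable.primrec_ofEncodableOfInfinite {α β : Type*} [Encodable α] [Infinite α]
    [Primcodable β] (hα : PrimrecPred (· ∈ Set.range (encode : α → ℕ))) {f : β → α}
    (hf : Primrec fun b => encode (f b)) :
    letI := Denumerable.ofEncodableOfInfinite α
    Primrec f := by
  let := Denumerable.ofEncodableOfInfinite α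
  let := decidableRangeEncode α
  refine Primrec.encode_iff.1 ((Primrec.list_length.comp
    ((Primrec.listFilter hα).comp (Primrec.list_range.comp hf))).of_eq fun b => ?_)
  exact (List.countP_eq_length_filter ..).symm

theorem Int.encode_natCast (n : ℕ) : encode (n : ℤ) = 2 * n := by
  change Nat.bit false n = 2 * n
  simp [Nat.bit]

theorem Int.encode_negSucc (n : ℕ) : encode (Int.negSucc n) = 2 * n + 1 := by
  change Nat.bit true n = 2 * n + 1
  simp [Nat.bit]

theorem Int.natAbs_eq_encode (z : ℤ) : z.natAbs = (encode z + 1) / 2 := by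
  cases z with
  | ofNat n => rw [Int.ofNat_eq_natCast, encode_natCast]; omega
  | negSucc n => rw [encode_negSucc]; simp; omega

namespace Rat

theorem encode_eq (q : ℚ) : encode q = Nat.pair (encode q.num) q.den := rfl

/-- `(c + 1) / 2` is the absolute value of the integer with code `c`. -/
theorem mem_range_encode_iff (k : ℕ) :
    k ∈ Set.range (encode : ℚ → ℕ) ↔
      0 < k.unpair.2 ∧ ((k.unpair.1 + 1) / 2).Coprime k.unpair.2 := by
  constructor
  · rintro ⟨q, rfl⟩
    simpa [encode_eq, ← Int.natAbs_eq_encode] using ⟨q.den_pos, q.reduced⟩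
  · rintro ⟨hden, hcop⟩
    set z : ℤ := Equiv.intEquivNat.symm k.unpair.1
    have hz : encode z = k.unpair.1 := Equiv.intEquivNat.apply_symm_apply _
    refine ⟨⟨z, k.unpair.2, hden.ne', by rwa [Int.natAbs_eq_encode, hz]⟩, ?_⟩
    change Nat.pair (encode z) k.unpair.2 = k
    rw [hz, Nat.pair_unpair]

theorem primrecPred_mem_range_encode : PrimrecPred (· ∈ Set.range (encode : ℚ → ℕ)) := by
  have hnum : Primrec fun k : ℕ => (k.unpair.1 + 1) / 2 :=
    Primrec.nat_div.comp (Primrec.succ.comp (Primrec.fst.comp Primrec.unpair)) (Primrec.const 2)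
  have hden : Primrec fun k : ℕ => k.unpair.2 := Primrec.snd.comp Primrec.unpair
  exact ((Primrec.nat_lt.comp (Primrec.const 0) hden).and
    (Primrec.eq.comp (Primrec.nat_gcd.comp hnum hden) (Primrec.const 1))).of_eq
    fun k => (mem_range_encode_iff k).symm

theorem primrec_of_num_den {α : Type*} [Primcodable α] {f : α → ℚ} {n d : α → ℕ}
    (hn : Primrec n) (hd : Primrec d) (hnum : ∀ a, (f a).num = n a) (hden : ∀ a, (f a).den = d a) :
    Primrec f :=
  Denumerable.primrec_ofEncodableOfInfinite primrecPred_mem_range_encode <|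
    (Primrec₂.natPair.comp (Primrec.nat_double.comp hn) hd).of_eq fun a => by
      rw [encode_eq, hnum, hden, Int.encode_natCast]

end Rat

def liouvilleNumerator (m : ℕ) : ℕ → ℕ
  | 0 => 1
  | x + 1 => liouvilleNumerator m x * m ^ ((x + 2)! - (x + 1)!) + 1

def liouvilleApprox (m x : ℕ) : ℚ :=
  ∑ n ∈ Finset.range (x + 1), 1 / (m : ℚ) ^ (n + 1)!

theorem liouvilleNumerator_coprime (m x : ℕ) : (liouvilleNumerator m x).Coprime m := by
  cases x with
  | zero => exact Nat.coprime_one_left m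
  | succ x =>
    obtain ⟨e, he⟩ : ∃ e, (x + 2)! - (x + 1)! = e + 1 :=
      Nat.exists_eq_add_one.2 (Nat.sub_pos_of_lt ((Nat.factorial_lt x.succ_pos).2 (lt_add_one _)))
    rw [liouvilleNumerator, he, pow_succ, ← mul_assoc, add_comm]
    exact (Nat.coprime_add_mul_right_left 1 m _).2 (Nat.coprime_one_left m)

theorem liouvilleApprox_eq {m : ℕ} (hm : m ≠ 0) (x : ℕ) :
    liouvilleApprox m x = liouvilleNumerator m x / (m : ℚ) ^ (x + 1)! := by
  induction x with
  | zero => simp [liouvilleApprox, liouvilleNumerator]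
  | succ x ih =>
    have hpow : (m : ℚ) ^ (x + 2)! = (m : ℚ) ^ ((x + 2)! - (x + 1)!) * (m : ℚ) ^ (x + 1)! := by
      rw [← pow_add, Nat.sub_add_cancel (Nat.factorial_le (by omega))]
    rw [liouvilleApprox, Finset.sum_range_succ, ← liouvilleApprox, ih, liouvilleNumerator, hpow]
    push_cast
    field_simp

theorem liouvilleApprox_num_den {m : ℕ} (hm : 0 < m) (x : ℕ) :
    (liouvilleApprox m x).num = liouvilleNumerator m x ∧
      (liouvilleApprox m x).den = m ^ (x + 1)! := by
  have hcop : (liouvilleNumerator m x : ℤ).natAbs.Coprime ((m ^ (x + 1)! : ℕ) : ℤ).natAbs := by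
    simpa using (liouvilleNumerator_coprime m x).pow_right _
  have hpos : (0 : ℤ) < (m ^ (x + 1)! : ℕ) := by positivity
  have h : liouvilleApprox m x =
      ((liouvilleNumerator m x : ℤ) : ℚ) / ((m ^ (x + 1)! : ℕ) : ℤ) := by
    rw [liouvilleApprox_eq hm.ne']
    push_cast
    rfl
  rw [h]
  exact ⟨Rat.num_div_eq_of_coprime hpos hcop, by exact_mod_cast Rat.den_div_eq_of_coprime hpos hcop⟩

theorem primrec_liouvilleNumerator (m : ℕ) : Primrec (liouvilleNumerator m) := by
  have hexp : Primrec fun x : ℕ => m ^ ((x + 2)! - (x + 1)!) :=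
    Primrec.nat_pow.comp (.const m) (Primrec.nat_sub.comp
      (Primrec.nat_factorial.comp (Primrec.succ.comp .succ)) (Primrec.nat_factorial.comp .succ))
  refine (Primrec.nat_rec₁ 1 (Primrec.succ.comp₂
    (Primrec.nat_mul.comp₂ Primrec₂.right (hexp.comp₂ Primrec₂.left)))).of_eq fun x => ?_
  induction x with
  | zero => rfl
  | succ x ih => simp [liouvilleNumerator, ← ih]

theorem primrec_liouvilleApprox {m : ℕ} (hm : 0 < m) : Primrec (liouvilleApprox m) :=
  Rat.primrec_of_num_den (primrec_liouvilleNumerator m)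
    (Primrec.nat_pow.comp (.const m) (Primrec.nat_factorial.comp .succ))
    (fun x => (liouvilleApprox_num_den hm x).1) (fun x => (liouvilleApprox_num_den hm x).2)

theorem abs_liouvilleApprox_sub_tsum_le {m : ℕ} (hm : 2 ≤ m) (x : ℕ) :
    |(liouvilleApprox m x : ℝ) - ∑' n : ℕ, 1 / (m : ℝ) ^ (n + 1)!| ≤ 1 / (x + 1) := by
  have hm' : (2 : ℝ) ≤ m := by exact_mod_cast hm
  have hsum : Summable fun n : ℕ => 1 / (m : ℝ) ^ (n + 1)! := by
    simpa using LiouvilleNumber.remainder_summable (by linarith) 0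
  have hsplit : (liouvilleApprox m x : ℝ) + LiouvilleNumber.remainder m (x + 1) =
      ∑' n : ℕ, 1 / (m : ℝ) ^ (n + 1)! := by
    rw [← hsum.sum_add_tsum_nat_add (x + 1)]
    simp [liouvilleApprox, LiouvilleNumber.remainder, add_assoc]
  have hbase : x + 1 < (m ^ (x + 1)!) ^ (x + 1) :=
    Nat.lt_pow_self (Nat.one_lt_pow (Nat.factorial_pos _).ne' hm)
  calc |(liouvilleApprox m x : ℝ) - ∑' n : ℕ, 1 / (m : ℝ) ^ (n + 1)!|
      = LiouvilleNumber.remainder m (x + 1) := by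
        rw [← hsplit, sub_add_cancel_left, abs_neg,
          abs_of_pos (LiouvilleNumber.remainder_pos (by linarith) _)]
    _ ≤ 1 / ((m : ℝ) ^ (x + 1)!) ^ (x + 1) := (LiouvilleNumber.remainder_lt _ hm').le
    _ ≤ 1 / (x + 1) := one_div_le_one_div_of_le (by positivity) (by exact_mod_cast hbase.le)

theorem primrecReal_liouville :
    IsPrimrecReal (∑' n : ℕ, (1 : ℝ) / 10 ^ Nat.factorial (n + 1)) :=
  ⟨liouvilleApprox 10, primrec_liouvilleApprox (by norm_num),
    fun x => by simpa using abs_liouvilleApprox_sub_tsum_le (m := 10) (by norm_num) x⟩
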